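/- Soundness of NSMB: if a nested-sequent Γ ⇒ Δ, T is provable in NSMB, then Γ ⇒ Δ, T is valid. -/

import Mathlib

/-! Soundness is proved rule by rule, by induction on derivations. A nested-sequent is seen
through its sequents and edge labels indexed by node addresses; validity depends only on
this view, so every rule that rewrites one node is justified by a local argument at that node
and, for the (□L) rules, at its neighbour across one bracket (using the symmetry of `R` for
(□L sym)). The side conditions are what the semantics needs: `(α,d) ⪯ (β,d')` makes the
bracket's constraint on `R` imply the one of `□^d_α`, `R(s,s) = 1` gives the reflexive rules and
`R ≥ 0` gives (□^c_0). For (□R) a refuting embedding of the conclusion is extended to the new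
child by a witness of the false box formula. -/

set_option maxHeartbeats 1000000

namespace MBQL

/-- The fixed finite set `J ⊆ [0,1]` of inner-product values, with `0, 1 ∈ J`. -/
structure MBParams where
  J : Set ℝ
  finite : J.Finite
  subI : J ⊆ Set.Icc (0:ℝ) 1
  zero_mem : (0:ℝ) ∈ J
  one_mem : (1:ℝ) ∈ J

/-- Formulas of **MB**: `A ::= p | ⊤ | ⊥ | ¬A | A∧A | □^c_α A | □^o_α A` (α ∈ J). -/
inductive MBForm (Pm : MBParams) : Type
  | var : ℕ → MBForm Pm
  | top : MBForm Pm
  | bot : MBForm Pm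
  | neg : MBForm Pm → MBForm Pm
  | conj : MBForm Pm → MBForm Pm → MBForm Pm
  | boxc : Pm.J → MBForm Pm → MBForm Pm
  | boxo : Pm.J → MBForm Pm → MBForm Pm

noncomputable instance {Pm : MBParams} : DecidableEq (MBForm Pm) := Classical.decEq _

/-- Valuation of a formula, given worlds `S`, a relation `R : S → S → ℝ` and a
valuation `V` of the propositional variables. -/
def MBForm.valR {Pm : MBParams} {S : Type} (R : S → S → ℝ) (V : ℕ → Set S) :
    MBForm Pm → Set S
  | .var n => V n
  | .top => Set.univ
  | .bot => ∅
  | .neg A => (A.valR R V)ᶜ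
  | .conj A B => A.valR R V ∩ B.valR R V
  | .boxc α A => {s | ∀ t, (α : ℝ) ≤ R s t → t ∈ A.valR R V}
  | .boxo α A => {s | ∀ t, (α : ℝ) < R s t → t ∈ A.valR R V}

/-- An EQL-frame. -/
structure EQLFrame where
  S : Type
  nonempty : Nonempty S
  R : S → S → ℝ
  mem_Icc : ∀ s t, R s t ∈ Set.Icc (0:ℝ) 1
  eq_one_iff : ∀ s t, (R s t = 1 ↔ s = t)
  symm : ∀ s t, R s t = R t s

/-- An MB-realization. -/
structure MBRealization (Pm : MBParams) where
  F : EQLFrame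
  P : Set (Set F.S)
  univ_mem : Set.univ ∈ P
  empty_mem : ∅ ∈ P
  inter_mem : ∀ X ∈ P, ∀ Y ∈ P, X ∩ Y ∈ P
  compl_mem : ∀ X ∈ P, Xᶜ ∈ P
  boxc_mem : ∀ α ∈ Pm.J, ∀ X ∈ P, {s | ∀ t, α ≤ F.R s t → t ∈ X} ∈ P
  boxo_mem : ∀ α ∈ Pm.J, ∀ X ∈ P, {s | ∀ t, α < F.R s t → t ∈ X} ∈ P
  V : ℕ → Set F.S
  V_mem : ∀ n, V n ∈ P

/-- The extended valuation of a formula in an MB-realization. -/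
def MBRealization.val {Pm : MBParams} (M : MBRealization Pm) (A : MBForm Pm) :
    Set M.F.S := A.valR M.F.R M.V

/-- Validity of an MB-formula. -/
def MBValid {Pm : MBParams} (A : MBForm Pm) : Prop :=
  ∀ (M : MBRealization Pm) (s : M.F.S), s ∈ M.val A

inductive Side : Type
  | c : Side
  | o : Side
deriving DecidableEq

/-- A label `(α, d)` on a modal bracket, with `α ∈ J − {1}`. -/
structure MBLab (Pm : MBParams) where
  α : ℝ
  memJ : α ∈ Pm.J
  ne_one : α ≠ 1
  d : Side

mutual
/-- Nested-sequents: a finite tree whose nodes are sequents (pairs of finite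
sets of formulas) and whose edges carry labels. -/
inductive NSeq (Pm : MBParams) : Type
  | node : Finset (MBForm Pm) → Finset (MBForm Pm) → NSeqs Pm → NSeq Pm
/-- A finite list of labelled child nested-sequents. -/
inductive NSeqs (Pm : MBParams) : Type
  | nil : NSeqs Pm
  | cons : MBLab Pm → NSeq Pm → NSeqs Pm → NSeqs Pm
end

/-- The `i`-th labelled child. -/
def NSeqs.get {Pm : MBParams} : NSeqs Pm → ℕ → Option (MBLab Pm × NSeq Pm)
  | .nil, _ => none
  | .cons l t _, 0 => some (l, t)
  | .cons _ _ ts, n+1 => ts.get n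

/-- `SubAt t p u`: the subtree of `t` at the path (node address) `p` is `u`. -/
inductive SubAt {Pm : MBParams} : NSeq Pm → List ℕ → NSeq Pm → Prop
  | here (t : NSeq Pm) : SubAt t [] t
  | there {Γ Δ : Finset (MBForm Pm)} {ts : NSeqs Pm} {i : ℕ} {l : MBLab Pm}
      {u v : NSeq Pm} {p : List ℕ} :
      NSeqs.get ts i = some (l, u) → SubAt u p v → SubAt (.node Γ Δ ts) (i :: p) v

/-- `p` is (the address of) a node of `t`. -/
def IsNode {Pm : MBParams} (t : NSeq Pm) (p : List ℕ) : Prop := ∃ u, SubAt t p u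

mutual
/-- Replace the sequent at the node with address `p` by `Γ' ⇒ Δ'`
(children are kept). -/
def NSeq.setSeq {Pm : MBParams} :
    NSeq Pm → List ℕ → Finset (MBForm Pm) → Finset (MBForm Pm) → NSeq Pm
  | .node _ _ ts, [], Γ', Δ' => .node Γ' Δ' ts
  | .node Γ Δ ts, i :: p, Γ', Δ' => .node Γ Δ (NSeqs.setSeqs ts i p Γ' Δ')
def NSeqs.setSeqs {Pm : MBParams} :
    NSeqs Pm → ℕ → List ℕ → Finset (MBForm Pm) → Finset (MBForm Pm) → NSeqs Pm
  | .nil, _, _, _, _ => .nil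
  | .cons l t ts, 0, p, Γ', Δ' => .cons l (t.setSeq p Γ' Δ') ts
  | .cons l t ts, n+1, p, Γ', Δ' => .cons l t (NSeqs.setSeqs ts n p Γ' Δ')
end

/-- Append a labelled child at the end of a children list. -/
def NSeqs.snoc {Pm : MBParams} : NSeqs Pm → MBLab Pm → NSeq Pm → NSeqs Pm
  | .nil, l, u => .cons l u .nil
  | .cons l' t ts, l, u => .cons l' t (ts.snoc l u)

mutual
/-- Add a new child `[u]_l` at the node with address `p`. -/
def NSeq.addChild {Pm : MBParams} : NSeq Pm → List ℕ → MBLab Pm → NSeq Pm → NSeq Pm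
  | .node Γ Δ ts, [], l, u => .node Γ Δ (ts.snoc l u)
  | .node Γ Δ ts, i :: p, l, u => .node Γ Δ (NSeqs.addChilds ts i p l u)
def NSeqs.addChilds {Pm : MBParams} : NSeqs Pm → ℕ → List ℕ → MBLab Pm → NSeq Pm → NSeqs Pm
  | .nil, _, _, _, _ => .nil
  | .cons l' t ts, 0, p, l, u => .cons l' (t.addChild p l u) ts
  | .cons l' t ts, n+1, p, l, u => .cons l' t (NSeqs.addChilds ts n p l u)
end


/-- Logical connectives defined by abbreviation: `A ∨ B`. -/
def MBForm.or {Pm : MBParams} (A B : MBForm Pm) : MBForm Pm := .neg (.conj (.neg A) (.neg B))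

/-- `A → B := ¬A ∨ B`. -/
def MBForm.imp {Pm : MBParams} (A B : MBForm Pm) : MBForm Pm := (MBForm.neg A).or B

/-- Conjunction of a list of formulas. -/
def conjList {Pm : MBParams} : List (MBForm Pm) → MBForm Pm
  | [] => .top
  | [A] => A
  | A :: B :: rest => .conj A (conjList (B :: rest))

/-- Disjunction of a list of formulas. -/
def disjList {Pm : MBParams} : List (MBForm Pm) → MBForm Pm
  | [] => .bot
  | [A] => A
  | A :: B :: rest => (A).or (disjList (B :: rest))

/-- `⋀Γ → ⋁Δ`. -/
noncomputable def seqForm {Pm : MBParams} (Γ Δ : Finset (MBForm Pm)) : MBForm Pm :=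
  (conjList Γ.toList).imp (disjList Δ.toList)

/-- The box corresponding to a bracket label. -/
def MBLab.box {Pm : MBParams} (l : MBLab Pm) (A : MBForm Pm) : MBForm Pm :=
  match l.d with
  | .c => .boxc ⟨l.α, l.memJ⟩ A
  | .o => .boxo ⟨l.α, l.memJ⟩ A

mutual
/-- The interpretation `τ` of a nested-sequent as a formula. -/
noncomputable def NSeq.tau {Pm : MBParams} : NSeq Pm → MBForm Pm
  | .node Γ Δ ts => NSeqs.tauAux (seqForm Γ Δ) ts
noncomputable def NSeqs.tauAux {Pm : MBParams} : MBForm Pm → NSeqs Pm → MBForm Pm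
  | A, .nil => A
  | A, .cons l t ts => NSeqs.tauAux (A.or (l.box t.tau)) ts
end

/-- `E` is an embedding of the nested-sequent `t` into the realization `M`
(`E` is given on node addresses). -/
def IsEmb {Pm : MBParams} (M : MBRealization Pm) (t : NSeq Pm)
    (E : List ℕ → M.F.S) : Prop :=
  ∀ p Γ Δ ts i l u, SubAt t p (.node Γ Δ ts) → NSeqs.get ts i = some (l, u) →
    (l.d = Side.c → l.α ≤ M.F.R (E p) (E (p ++ [i]))) ∧
    (l.d = Side.o → l.α < M.F.R (E p) (E (p ++ [i])))

/-- The nested-sequent `t` is false in `M` under `E`. -/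
def FalseUnder {Pm : MBParams} (M : MBRealization Pm) (t : NSeq Pm)
    (E : List ℕ → M.F.S) : Prop :=
  ∀ p Γ Δ ts, SubAt t p (.node Γ Δ ts) →
    (∀ A ∈ Γ, E p ∈ M.val A) ∧ (∀ A ∈ Δ, E p ∉ M.val A)

/-- Validity of a nested-sequent: it is not false under any embedding into
any MB-realization. -/
def NSValid {Pm : MBParams} (t : NSeq Pm) : Prop :=
  ∀ (M : MBRealization Pm) (E : List ℕ → M.F.S), IsEmb M t E → ¬ FalseUnder M t E


/-- `□^d_α A`. -/
def mkBox {Pm : MBParams} (d : Side) (α : Pm.J) (A : MBForm Pm) : MBForm Pm :=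
  match d with
  | .c => .boxc α A
  | .o => .boxo α A

/-- The total order `⪯` on `I × {c,o}`: `pleq α d β d'` means `(α,d) ⪯ (β,d')`. -/
def pleq : ℝ → Side → ℝ → Side → Prop
  | α, .o, β, .c => α < β
  | α, _, β, _ => α ≤ β

/-- Provability in the nested-sequent calculus **NSMB**.  The boolean
parameter records whether the rule (cut) may be used. -/
inductive Provable {Pm : MBParams} : Bool → NSeq Pm → Prop
  /-- axiom `‖A, Γ ⇒ Δ, A, T‖` -/
  | axId {cut : Bool} {t : NSeq Pm} {p Γ Δ ts A} :
      SubAt t p (.node Γ Δ ts) → A ∈ Γ → A ∈ Δ → Provable cut t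
  /-- axiom `‖Γ ⇒ Δ, ⊤, T‖` -/
  | axTop {cut : Bool} {t : NSeq Pm} {p Γ Δ ts} :
      SubAt t p (.node Γ Δ ts) → MBForm.top ∈ Δ → Provable cut t
  /-- axiom `‖⊥, Γ ⇒ Δ, T‖` -/
  | axBot {cut : Bool} {t : NSeq Pm} {p Γ Δ ts} :
      SubAt t p (.node Γ Δ ts) → MBForm.bot ∈ Γ → Provable cut t
  /-- axiom `‖Γ ⇒ Δ, □^o_1 A, T‖` -/
  | axBoxO1 {cut : Bool} {t : NSeq Pm} {p Γ Δ ts A} :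
      SubAt t p (.node Γ Δ ts) → MBForm.boxo ⟨1, Pm.one_mem⟩ A ∈ Δ → Provable cut t
  /-- rule (cut) -/
  | cutR {t : NSeq Pm} {p Γ Δ ts A} :
      SubAt t p (.node Γ Δ ts) →
      Provable true (t.setSeq p Γ (insert A Δ)) →
      Provable true (t.setSeq p (insert A Γ) Δ) →
      Provable true t
  /-- rule (wL) -/
  | wL {cut : Bool} {t : NSeq Pm} {p Γ Δ ts A} :
      SubAt t p (.node Γ Δ ts) → Provable cut t →
      Provable cut (t.setSeq p (insert A Γ) Δ)
  /-- rule (wR) -/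
  | wR {cut : Bool} {t : NSeq Pm} {p Γ Δ ts A} :
      SubAt t p (.node Γ Δ ts) → Provable cut t →
      Provable cut (t.setSeq p Γ (insert A Δ))
  /-- rule (¬L) -/
  | negL {cut : Bool} {t : NSeq Pm} {p Γ Δ ts A} :
      SubAt t p (.node Γ Δ ts) →
      Provable cut (t.setSeq p Γ (insert A Δ)) →
      Provable cut (t.setSeq p (insert (MBForm.neg A) Γ) Δ)
  /-- rule (¬R) -/
  | negR {cut : Bool} {t : NSeq Pm} {p Γ Δ ts A} :
      SubAt t p (.node Γ Δ ts) →
      Provable cut (t.setSeq p (insert A Γ) Δ) →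
      Provable cut (t.setSeq p Γ (insert (MBForm.neg A) Δ))
  /-- rule (∧L) -/
  | andL {cut : Bool} {t : NSeq Pm} {p Γ Δ ts A B} :
      SubAt t p (.node Γ Δ ts) →
      Provable cut (t.setSeq p (insert A (insert B Γ)) Δ) →
      Provable cut (t.setSeq p (insert (MBForm.conj A B) Γ) Δ)
  /-- rule (∧R) -/
  | andR {cut : Bool} {t : NSeq Pm} {p Γ Δ ts A B} :
      SubAt t p (.node Γ Δ ts) →
      Provable cut (t.setSeq p Γ (insert A Δ)) →
      Provable cut (t.setSeq p Γ (insert B Δ)) →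
      Provable cut (t.setSeq p Γ (insert (MBForm.conj A B) Δ))
  /-- rule (□L), with side condition `(α,d) ⪯ (β,d')` -/
  | boxL {cut : Bool} {t : NSeq Pm} {p Γ Δ ts i l u Γ' Δ' ts' A} {α : Pm.J} {d : Side} :
      SubAt t p (.node Γ Δ ts) → NSeqs.get ts i = some (l, u) →
      SubAt t (p ++ [i]) (.node Γ' Δ' ts') →
      pleq (α : ℝ) d l.α l.d →
      Provable cut (t.setSeq (p ++ [i]) (insert A Γ') Δ') →
      Provable cut (t.setSeq p (insert (mkBox d α A) Γ) Δ)
  /-- rule (□L sym), with side condition `(α,d) ⪯ (β,d')` -/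
  | boxLsym {cut : Bool} {t : NSeq Pm} {p Γ Δ ts i l u Γ' Δ' ts' A} {α : Pm.J} {d : Side} :
      SubAt t p (.node Γ Δ ts) → NSeqs.get ts i = some (l, u) →
      SubAt t (p ++ [i]) (.node Γ' Δ' ts') →
      pleq (α : ℝ) d l.α l.d →
      Provable cut (t.setSeq p (insert A Γ) Δ) →
      Provable cut (t.setSeq (p ++ [i]) (insert (mkBox d α A) Γ') Δ')
  /-- rule (□L self), with side condition `(α,d) ≠ (1,o)` -/
  | boxLself {cut : Bool} {t : NSeq Pm} {p Γ Δ ts A} {α : Pm.J} {d : Side} :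
      SubAt t p (.node Γ Δ ts) → ¬((α : ℝ) = 1 ∧ d = Side.o) →
      Provable cut (t.setSeq p (insert A Γ) Δ) →
      Provable cut (t.setSeq p (insert (mkBox d α A) Γ) Δ)
  /-- rule (□^c_0): erase `A` from the left of one node and add `□^c_0 A`
  to the left of another arbitrary node -/
  | boxC0 {cut : Bool} {t : NSeq Pm} {p Γ Δ ts q Γ'' Δ'' ts'' A} :
      SubAt t p (.node Γ Δ ts) → SubAt t q (.node Γ'' Δ'' ts'') →
      Provable cut (t.setSeq p (insert A Γ) Δ) →
      Provable cut (t.setSeq q (insert (MBForm.boxc ⟨0, Pm.zero_mem⟩ A) Γ'') Δ'')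
  /-- rule (□R) -/
  | boxR {cut : Bool} {t : NSeq Pm} {p Γ Δ ts A} {l : MBLab Pm} :
      SubAt t p (.node Γ Δ ts) →
      Provable cut (t.addChild p l (.node ∅ {A} .nil)) →
      Provable cut (t.setSeq p Γ (insert (l.box A) Δ))
  /-- rule (□R self) -/
  | boxRself {cut : Bool} {t : NSeq Pm} {p Γ Δ ts A} :
      SubAt t p (.node Γ Δ ts) →
      Provable cut (t.setSeq p Γ (insert A Δ)) →
      Provable cut (t.setSeq p Γ (insert (MBForm.boxc ⟨1, Pm.one_mem⟩ A) Δ))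


/-- The subformula relation. -/
inductive Subf {Pm : MBParams} : MBForm Pm → MBForm Pm → Prop
  | refl (A : MBForm Pm) : Subf A A
  | negS {A B : MBForm Pm} : Subf A B → Subf A (.neg B)
  | conjL {A B C : MBForm Pm} : Subf A B → Subf A (.conj B C)
  | conjR {A B C : MBForm Pm} : Subf A C → Subf A (.conj B C)
  | boxcS {A B : MBForm Pm} {α : Pm.J} : Subf A B → Subf A (.boxc α B)
  | boxoS {A B : MBForm Pm} {α : Pm.J} : Subf A B → Subf A (.boxo α B)

/-- `A` occurs in (some sequent of) the nested-sequent `t`. -/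
def OccursIn {Pm : MBParams} (A : MBForm Pm) (t : NSeq Pm) : Prop :=
  ∃ p Γ Δ ts, SubAt t p (.node Γ Δ ts) ∧ (A ∈ Γ ∨ A ∈ Δ)

/-- One step of the saturation procedure used to build `Γ_C ⇒ Δ_C, T_C`.
The state is a nested-sequent together with the set of (address, formula)
occurrences of right-hand boxed formulas that have already been processed by
step (8). -/
inductive SatStep {Pm : MBParams} :
    NSeq Pm × Set (List ℕ × MBForm Pm) → NSeq Pm × Set (List ℕ × MBForm Pm) → Prop
  /-- step (1): `A ∧ B` on the left -/
  | andL {t D p Γ Δ ts A B} :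
      SubAt t p (.node Γ Δ ts) → MBForm.conj A B ∈ Γ →
      SatStep (t, D) (t.setSeq p (insert A (insert B Γ)) Δ, D)
  /-- step (2): `A ∧ B` on the right; the disjunct keeping unprovability is adopted -/
  | andR {t D p Γ Δ ts A B C} :
      SubAt t p (.node Γ Δ ts) → MBForm.conj A B ∈ Δ → (C = A ∨ C = B) →
      ¬ Provable true (t.setSeq p Γ (insert C Δ)) →
      SatStep (t, D) (t.setSeq p Γ (insert C Δ), D)
  /-- step (3): `¬A` on the left -/
  | negL {t D p Γ Δ ts A} :
      SubAt t p (.node Γ Δ ts) → MBForm.neg A ∈ Γ →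
      SatStep (t, D) (t.setSeq p Γ (insert A Δ), D)
  /-- step (4): `¬A` on the right -/
  | negR {t D p Γ Δ ts A} :
      SubAt t p (.node Γ Δ ts) → MBForm.neg A ∈ Δ →
      SatStep (t, D) (t.setSeq p (insert A Γ) Δ, D)
  /-- step (5): `□^d_α A` on the left of the parent of a bracket with `(α,d) ⪯ (β,d')` -/
  | boxL {t D p Γ Δ ts i l u Γ' Δ' ts' A} {α : Pm.J} {d : Side} :
      SubAt t p (.node Γ Δ ts) → NSeqs.get ts i = some (l, u) →
      SubAt t (p ++ [i]) (.node Γ' Δ' ts') →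
      pleq (α : ℝ) d l.α l.d → mkBox d α A ∈ Γ →
      SatStep (t, D) (t.setSeq (p ++ [i]) (insert A Γ') Δ', D)
  /-- step (6): `□^d_α A` on the left of the child of a bracket with `(α,d) ⪯ (β,d')` -/
  | boxLsym {t D p Γ Δ ts i l u Γ' Δ' ts' A} {α : Pm.J} {d : Side} :
      SubAt t p (.node Γ Δ ts) → NSeqs.get ts i = some (l, u) →
      SubAt t (p ++ [i]) (.node Γ' Δ' ts') →
      pleq (α : ℝ) d l.α l.d → mkBox d α A ∈ Γ' →
      SatStep (t, D) (t.setSeq p (insert A Γ) Δ, D)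
  /-- step (7): `□^d_α A` on the left, `(α,d) ≠ (1,o)` -/
  | boxLself {t D p Γ Δ ts A} {α : Pm.J} {d : Side} :
      SubAt t p (.node Γ Δ ts) → ¬((α : ℝ) = 1 ∧ d = Side.o) → mkBox d α A ∈ Γ →
      SatStep (t, D) (t.setSeq p (insert A Γ) Δ, D)
  /-- step (8): `□^d_α A` on the right (`α ≠ 1`), performed once per occurrence -/
  | boxR {t D p Γ Δ ts A} {α : Pm.J} {d : Side} (hne : (α : ℝ) ≠ 1) :
      SubAt t p (.node Γ Δ ts) → mkBox d α A ∈ Δ → (p, mkBox d α A) ∉ D →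
      SatStep (t, D)
        (t.addChild p ⟨(α : ℝ), α.2, hne, d⟩ (.node ∅ {A} .nil),
         insert (p, mkBox d α A) D)
  /-- step (9): `□^c_1 A` on the right -/
  | boxRself {t D p Γ Δ ts A} :
      SubAt t p (.node Γ Δ ts) → MBForm.boxc ⟨1, Pm.one_mem⟩ A ∈ Δ →
      SatStep (t, D) (t.setSeq p Γ (insert A Δ), D)
  /-- step (10): `□^c_0 A` on the left of some node: add `A` to the left of any node -/
  | boxC0 {t D p Γ Δ ts q Γ'' Δ'' ts'' A} :
      SubAt t p (.node Γ Δ ts) → MBForm.boxc ⟨0, Pm.zero_mem⟩ A ∈ Γ →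
      SubAt t q (.node Γ'' Δ'' ts'') →
      SatStep (t, D) (t.setSeq q (insert A Γ'') Δ'', D)

/-- A state of the saturation procedure is saturated (terminal) when no
saturation step changes it any more. -/
def Saturated {Pm : MBParams} (s : NSeq Pm × Set (List ℕ × MBForm Pm)) : Prop :=
  ∀ s', SatStep s s' → s' = s


mutual
/-- The subtree of `t` at address `p`, as a function. -/
def NSeq.sub? {Pm : MBParams} : NSeq Pm → List ℕ → Option (NSeq Pm)
  | t, [] => some t
  | .node _ _ ts, i :: p => NSeqs.subs? ts i p
def NSeqs.subs? {Pm : MBParams} : NSeqs Pm → ℕ → List ℕ → Option (NSeq Pm)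
  | .nil, _, _ => none
  | .cons _ t _, 0, p => t.sub? p
  | .cons _ _ ts, n+1, p => NSeqs.subs? ts n p
end

/-- The label of the edge from the node at address `p` to its `i`-th child. -/
def labelAt {Pm : MBParams} (t : NSeq Pm) (p : List ℕ) (i : ℕ) : Option (MBLab Pm) :=
  match t.sub? p with
  | some (.node _ _ ts) => (NSeqs.get ts i).map Prod.fst
  | none => none

/-- The set of elements of `J` appearing in a formula. -/
def MBForm.jsetF {Pm : MBParams} : MBForm Pm → Set ℝ
  | .var _ => ∅
  | .top => ∅
  | .bot => ∅
  | .neg A => A.jsetF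
  | .conj A B => A.jsetF ∪ B.jsetF
  | .boxc α A => insert (α : ℝ) A.jsetF
  | .boxo α A => insert (α : ℝ) A.jsetF

mutual
/-- The numbers appearing in a nested-sequent (in formulas or brackets). -/
def NSeq.jsetT {Pm : MBParams} : NSeq Pm → Set ℝ
  | .node Γ Δ ts =>
      (⋃ A ∈ Γ, MBForm.jsetF A) ∪ (⋃ A ∈ Δ, MBForm.jsetF A) ∪ NSeqs.jsetTs ts
def NSeqs.jsetTs {Pm : MBParams} : NSeqs Pm → Set ℝ
  | .nil => ∅
  | .cons l t ts => insert l.α (t.jsetT ∪ NSeqs.jsetTs ts)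
end

/-- `(Γ ⇒ Δ, T)_J`: the numbers appearing in the nested-sequent, with `0` and `1`. -/
def jset {Pm : MBParams} (t : NSeq Pm) : Set ℝ :=
  insert (0:ℝ) (insert (1:ℝ) t.jsetT)

/-- `U` is an interpolated set of `Js`. -/
def Interpolated (Js U : Set ℝ) : Prop :=
  U.Finite ∧ U ⊆ Set.Icc (0:ℝ) 1 ∧ Js ⊆ U ∧
    ∀ α ∈ Js, ∀ β ∈ Js, α < β → (∀ γ ∈ Js, ¬ (α < γ ∧ γ < β)) →
      ∃! δ, δ ∈ U ∧ α < δ ∧ δ < β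

/-- `Suc U α`: the successor of `α` in the interpolated set `U` (with `Suc 1 = 1`). -/
noncomputable def Suc (U : Set ℝ) (α : ℝ) : ℝ := sInf ((U ∩ Set.Ioi α) ∪ {1})

/-- Auxiliary value of the canonical relation in case `q` is the child of `p`
via a bracket (`β` for `[·]^c_β`, `Suc β` for `[·]^o_β`), and `0` otherwise. -/
noncomputable def lval {Pm : MBParams} (t : NSeq Pm) (U : Set ℝ) (p q : List ℕ) : ℝ :=
  match q.getLast? with
  | none => 0
  | some i =>
      if q.dropLast = p then
        match labelAt t p i with
        | some l => (match l.d with | Side.c => l.α | Side.o => Suc U l.α)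
        | none => 0
      else 0

/-- The canonical relation `R_C` (on node addresses). -/
noncomputable def RC {Pm : MBParams} (t : NSeq Pm) (U : Set ℝ) (p q : List ℕ) : ℝ :=
  if p = q then 1 else max (lval t U p q) (lval t U q p)

/-- The worlds of the canonical model: the nodes of the saturated nested-sequent. -/
def World {Pm : MBParams} (t : NSeq Pm) : Type := {p : List ℕ // IsNode t p}

/-- The canonical relation `R_C`, as a function on the worlds. -/
noncomputable def RCW {Pm : MBParams} (t : NSeq Pm) (U : Set ℝ) (p q : World t) : ℝ :=
  RC t U p.val q.val

/-- The canonical valuation `V_C` of the propositional variables. -/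
def VC {Pm : MBParams} (t : NSeq Pm) (n : ℕ) : Set (World t) :=
  {p | ∃ Γ Δ ts, SubAt t p.val (.node Γ Δ ts) ∧ MBForm.var n ∈ Γ}

/-- `P_C`: the family of all definable sets of worlds of the canonical model. -/
def PC {Pm : MBParams} (t : NSeq Pm) (U : Set ℝ) : Set (Set (World t)) :=
  {X | ∃ A : MBForm Pm, X = MBForm.valR (RCW t U) (VC t) A}

variable {Pm : MBParams}

def NSeqs.length : NSeqs Pm → ℕ
  | .nil => 0
  | .cons _ _ ts => ts.length + 1

theorem NSeqs.get_length : ∀ ts : NSeqs Pm, ts.get ts.length = none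
  | .nil => rfl
  | .cons _ _ ts => get_length ts

theorem NSeqs.get_setSeqs : ∀ (ts : NSeqs Pm) (i : ℕ) (p : List ℕ) (Γ Δ : Finset (MBForm Pm))
    (j : ℕ), (ts.setSeqs i p Γ Δ).get j =
      if j = i then (ts.get i).map (Prod.map id (·.setSeq p Γ Δ)) else ts.get j
  | .nil, _, _, _, _, _ => by simp [NSeqs.setSeqs, NSeqs.get]
  | .cons _ _ _, 0, _, _, _, 0 | .cons _ _ _, 0, _, _, _, _ + 1
  | .cons _ _ _, _ + 1, _, _, _, 0 => by simp [NSeqs.setSeqs, NSeqs.get]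
  | .cons _ _ ts, i + 1, p, Γ, Δ, j + 1 => by
      simp [NSeqs.setSeqs, NSeqs.get, get_setSeqs ts i p Γ Δ j]

theorem NSeqs.get_snoc : ∀ (ts : NSeqs Pm) (l : MBLab Pm) (u : NSeq Pm) (j : ℕ),
    (ts.snoc l u).get j = if j = ts.length then some (l, u) else ts.get j
  | .nil, _, _, 0 | .nil, _, _, _ + 1 | .cons _ _ _, _, _, 0 => by
      simp [NSeqs.snoc, NSeqs.get, NSeqs.length]
  | .cons _ _ ts, l, u, j + 1 => by
      simp [NSeqs.snoc, NSeqs.get, NSeqs.length, get_snoc ts l u j]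

theorem NSeqs.get_addChilds : ∀ (ts : NSeqs Pm) (i : ℕ) (p : List ℕ) (l : MBLab Pm)
    (u : NSeq Pm) (j : ℕ), (ts.addChilds i p l u).get j =
      if j = i then (ts.get i).map (Prod.map id (·.addChild p l u)) else ts.get j
  | .nil, _, _, _, _, _ => by simp [NSeqs.addChilds, NSeqs.get]
  | .cons _ _ _, 0, _, _, _, 0 | .cons _ _ _, 0, _, _, _, _ + 1
  | .cons _ _ _, _ + 1, _, _, _, 0 => by simp [NSeqs.addChilds, NSeqs.get]
  | .cons _ _ ts, i + 1, p, l, u, j + 1 => by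
      simp [NSeqs.addChilds, NSeqs.get, get_addChilds ts i p l u j]

@[simp]
theorem NSeq.sub?_nil (t : NSeq Pm) : t.sub? [] = some t := by
  cases t; rfl

theorem NSeqs.subs?_eq : ∀ (ts : NSeqs Pm) (i : ℕ) (q : List ℕ),
    ts.subs? i q = (ts.get i).bind (·.2.sub? q)
  | .nil, _, _ => by simp [NSeqs.subs?, NSeqs.get]
  | .cons _ _ _, 0, _ => rfl
  | .cons _ _ ts, i + 1, q => by rw [NSeqs.subs?, subs?_eq ts i q]; rfl

@[simp]
theorem NSeq.sub?_cons (Γ Δ : Finset (MBForm Pm)) (ts : NSeqs Pm) (i : ℕ) (q : List ℕ) :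
    (NSeq.node Γ Δ ts).sub? (i :: q) = (ts.get i).bind (·.2.sub? q) := by
  rw [NSeq.sub?, NSeqs.subs?_eq]

theorem NSeq.sub?_append : ∀ (t : NSeq Pm) (p q : List ℕ),
    t.sub? (p ++ q) = (t.sub? p).bind (·.sub? q)
  | _, [], _ => by simp
  | .node _ _ ts, i :: p, q => by
      simp [Option.bind_assoc, NSeq.sub?_append _ p q]

theorem SubAt.sub?_eq {t u : NSeq Pm} {q : List ℕ} (h : SubAt t q u) : t.sub? q = some u := by
  induction h with
  | here => simp
  | there hget _ ih => simp [hget, ih]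

theorem subAt_of_sub?_eq : ∀ {t u : NSeq Pm} {q : List ℕ}, t.sub? q = some u → SubAt t q u
  | _, _, [], h => by simp_all [SubAt.here]
  | .node _ _ ts, _, i :: q, h => by
      simp only [NSeq.sub?_cons, Option.bind_eq_some_iff] at h
      obtain ⟨⟨l, v⟩, hget, hv⟩ := h
      exact .there hget (subAt_of_sub?_eq hv)

theorem sub?_eq_some_iff {t u : NSeq Pm} {q : List ℕ} : t.sub? q = some u ↔ SubAt t q u :=
  ⟨subAt_of_sub?_eq, SubAt.sub?_eq⟩

theorem SubAt.child {t : NSeq Pm} {q : List ℕ} {Γ Δ : Finset (MBForm Pm)} {ts : NSeqs Pm}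
    {i : ℕ} {l : MBLab Pm} {u : NSeq Pm} (h : SubAt t q (.node Γ Δ ts))
    (hget : ts.get i = some (l, u)) : SubAt t (q ++ [i]) u := by
  rw [← sub?_eq_some_iff, NSeq.sub?_append, h.sub?_eq]
  simp [hget]

theorem NSeq.sub?_append_length {t : NSeq Pm} {p : List ℕ} {Γ Δ : Finset (MBForm Pm)}
    {ts : NSeqs Pm} (hp : SubAt t p (.node Γ Δ ts)) : t.sub? (p ++ [ts.length]) = none := by
  simp [NSeq.sub?_append, hp.sub?_eq, NSeqs.get_length]

def NSeq.rootSeq : NSeq Pm → Finset (MBForm Pm) × Finset (MBForm Pm)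
  | .node Γ Δ _ => (Γ, Δ)

def NSeq.seqAt (t : NSeq Pm) (q : List ℕ) : Option (Finset (MBForm Pm) × Finset (MBForm Pm)) :=
  (t.sub? q).map NSeq.rootSeq

@[simp]
theorem NSeq.seqAt_nil (Γ Δ : Finset (MBForm Pm)) (ts : NSeqs Pm) :
    (NSeq.node Γ Δ ts).seqAt [] = some (Γ, Δ) := rfl

@[simp]
theorem NSeq.seqAt_cons (Γ Δ : Finset (MBForm Pm)) (ts : NSeqs Pm) (i : ℕ) (q : List ℕ) :
    (NSeq.node Γ Δ ts).seqAt (i :: q) = (ts.get i).bind (·.2.seqAt q) := by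
  simp only [NSeq.seqAt, NSeq.sub?_cons, Option.map_bind]
  rfl

@[simp]
theorem labelAt_nil (Γ Δ : Finset (MBForm Pm)) (ts : NSeqs Pm) (i : ℕ) :
    labelAt (NSeq.node Γ Δ ts) [] i = (ts.get i).map Prod.fst := by
  simp [labelAt]

@[simp]
theorem labelAt_cons (Γ Δ : Finset (MBForm Pm)) (ts : NSeqs Pm) (j : ℕ) (q : List ℕ) (i : ℕ) :
    labelAt (NSeq.node Γ Δ ts) (j :: q) i = (ts.get j).bind (labelAt ·.2 q i) := by
  unfold labelAt
  rw [NSeq.sub?_cons]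
  cases ts.get j <;> rfl

theorem NSeq.seqAt_setSeq {t u : NSeq Pm} {p : List ℕ} (hp : SubAt t p u)
    (Γ Δ : Finset (MBForm Pm)) :
    (t.setSeq p Γ Δ).seqAt = Function.update t.seqAt p (some (Γ, Δ)) := by
  induction hp with
  | here t =>
      obtain ⟨Γ₀, Δ₀, ts⟩ := t
      funext q
      cases q <;> simp [NSeq.setSeq]
  | @there _ _ _ k _ _ _ _ hget _ ih =>
      funext q
      cases q with
      | nil => simp [NSeq.setSeq]
      | cons j q =>
          by_cases hj : j = k
          · subst hj; simp [NSeq.setSeq, NSeqs.get_setSeqs, hget, ih, Function.update_apply]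
          · simp [NSeq.setSeq, NSeqs.get_setSeqs, hj]

theorem labelAt_setSeq {t u : NSeq Pm} {p : List ℕ} (hp : SubAt t p u)
    (Γ Δ : Finset (MBForm Pm)) : labelAt (t.setSeq p Γ Δ) = labelAt t := by
  induction hp with
  | here t =>
      obtain ⟨Γ₀, Δ₀, ts⟩ := t
      funext q i
      cases q <;> simp [NSeq.setSeq]
  | @there _ _ _ k _ _ _ _ hget _ ih =>
      funext q i
      cases q with
      | nil => by_cases hi : i = k <;> simp [NSeq.setSeq, NSeqs.get_setSeqs, hget, hi]
      | cons j q =>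
          by_cases hj : j = k
          · subst hj; simp [NSeq.setSeq, NSeqs.get_setSeqs, hget, ih]
          · simp [NSeq.setSeq, NSeqs.get_setSeqs, hj]

theorem NSeq.seqAt_addChild {t : NSeq Pm} {p : List ℕ} {Γ Δ : Finset (MBForm Pm)}
    {ts : NSeqs Pm} (hp : SubAt t p (.node Γ Δ ts)) (l : MBLab Pm) (Γa Δa : Finset (MBForm Pm)) :
    (t.addChild p l (.node Γa Δa .nil)).seqAt =
      Function.update t.seqAt (p ++ [ts.length]) (some (Γa, Δa)) := by
  generalize hu : NSeq.node Γ Δ ts = u at hp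
  induction hp with
  | here t =>
      subst hu
      funext q
      cases q with
      | nil => simp [NSeq.addChild]
      | cons j q =>
          by_cases hj : j = ts.length <;> cases q <;>
            simp [NSeq.addChild, NSeqs.get_snoc, hj, NSeqs.get_length, NSeqs.get]
  | @there _ _ _ k _ _ _ _ hget _ ih =>
      subst hu
      funext q
      cases q with
      | nil => simp [NSeq.addChild]
      | cons j q =>
          by_cases hj : j = k
          · subst hj; simp [NSeq.addChild, NSeqs.get_addChilds, hget, ih, Function.update_apply]
          · simp [NSeq.addChild, NSeqs.get_addChilds, hj]

theorem labelAt_addChild {t : NSeq Pm} {p : List ℕ} {Γ Δ : Finset (MBForm Pm)}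
    {ts : NSeqs Pm} (hp : SubAt t p (.node Γ Δ ts)) (l : MBLab Pm) (Γa Δa : Finset (MBForm Pm))
    (q : List ℕ) (i : ℕ) :
    labelAt (t.addChild p l (.node Γa Δa .nil)) q i =
      if q = p ∧ i = ts.length then some l else labelAt t q i := by
  generalize hu : NSeq.node Γ Δ ts = u at hp
  induction hp generalizing q with
  | here t =>
      subst hu
      cases q with
      | nil => by_cases hi : i = ts.length <;> simp [NSeq.addChild, NSeqs.get_snoc, hi]
      | cons j q =>
          by_cases hj : j = ts.length <;> cases q <;>
            simp [NSeq.addChild, NSeqs.get_snoc, hj, NSeqs.get_length, NSeqs.get]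
  | @there _ _ _ k _ _ _ _ hget _ ih =>
      subst hu
      cases q with
      | nil => by_cases hi : i = k <;> simp [NSeq.addChild, NSeqs.get_addChilds, hget, hi]
      | cons j q =>
          by_cases hj : j = k
          · subst hj; simp [NSeq.addChild, NSeqs.get_addChilds, hget, ih q rfl]
          · simp [NSeq.addChild, NSeqs.get_addChilds, hj]

theorem labelAt_eq_some_iff {t : NSeq Pm} {q : List ℕ} {i : ℕ} {l : MBLab Pm} :
    labelAt t q i = some l ↔
      ∃ Γ Δ ts u, SubAt t q (.node Γ Δ ts) ∧ ts.get i = some (l, u) := by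
  simp only [labelAt, ← sub?_eq_some_iff]
  constructor
  · intro h
    split at h
    · simp only [Option.map_eq_some_iff] at h
      obtain ⟨⟨l', u⟩, hget, rfl⟩ := h
      exact ⟨_, _, _, u, by assumption, hget⟩
    · simp at h
  · rintro ⟨Γ, Δ, ts, u, hq, hget⟩
    simp [hq, hget]

def SeqFalse (M : MBRealization Pm) (s : M.F.S)
    (σ : Finset (MBForm Pm) × Finset (MBForm Pm)) : Prop :=
  (∀ A ∈ σ.1, s ∈ M.val A) ∧ ∀ A ∈ σ.2, s ∉ M.val A

def MBLab.Holds (l : MBLab Pm) (r : ℝ) : Prop :=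
  (l.d = Side.c → l.α ≤ r) ∧ (l.d = Side.o → l.α < r)

variable {M : MBRealization Pm} {t : NSeq Pm} {E : List ℕ → M.F.S}

theorem SeqFalse.mono {s : M.F.S} {Γ Δ Γ' Δ' : Finset (MBForm Pm)}
    (h : SeqFalse M s (Γ', Δ')) (hΓ : Γ ⊆ Γ') (hΔ : Δ ⊆ Δ') : SeqFalse M s (Γ, Δ) :=
  ⟨fun A hA => h.1 A (hΓ hA), fun A hA => h.2 A (hΔ hA)⟩

theorem falseUnder_iff_seqAt :
    FalseUnder M t E ↔ ∀ q, ∀ σ ∈ t.seqAt q, SeqFalse M (E q) σ := by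
  simp only [NSeq.seqAt, Option.mem_def, Option.map_eq_some_iff, sub?_eq_some_iff]
  constructor
  · rintro h q _ ⟨⟨Γ, Δ, ts⟩, hq, rfl⟩
    exact h q Γ Δ ts hq
  · intro h q Γ Δ ts hq
    exact h q _ ⟨_, hq, rfl⟩

theorem isEmb_iff_labelAt :
    IsEmb M t E ↔ ∀ q i, ∀ l ∈ labelAt t q i, l.Holds (M.F.R (E q) (E (q ++ [i]))) := by
  simp only [Option.mem_def, labelAt_eq_some_iff]
  constructor
  · rintro h q i l ⟨Γ, Δ, ts, u, hq, hget⟩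
    exact h q Γ Δ ts i l u hq hget
  · intro h q Γ Δ ts i l u hq hget
    exact h q i l ⟨Γ, Δ, ts, u, hq, hget⟩

theorem isEmb_setSeq_iff {p : List ℕ} {u : NSeq Pm} (hp : SubAt t p u)
    (Γ Δ : Finset (MBForm Pm)) : IsEmb M (t.setSeq p Γ Δ) E ↔ IsEmb M t E := by
  simp only [isEmb_iff_labelAt, labelAt_setSeq hp]

theorem falseUnder_setSeq_iff {p : List ℕ} {u : NSeq Pm} (hp : SubAt t p u)
    (Γ Δ : Finset (MBForm Pm)) :
    FalseUnder M (t.setSeq p Γ Δ) E ↔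
      SeqFalse M (E p) (Γ, Δ) ∧ ∀ q ≠ p, ∀ σ ∈ t.seqAt q, SeqFalse M (E q) σ := by
  rw [falseUnder_iff_seqAt, NSeq.seqAt_setSeq hp,
    Function.forall_update_iff _ fun q o => ∀ σ ∈ o, SeqFalse M (E q) σ]
  simp

theorem seqFalse_insert_left {s : M.F.S} {Γ Δ : Finset (MBForm Pm)} {A : MBForm Pm} :
    SeqFalse M s (insert A Γ, Δ) ↔ s ∈ M.val A ∧ SeqFalse M s (Γ, Δ) := by
  simp [SeqFalse, and_assoc]

theorem seqFalse_insert_right {s : M.F.S} {Γ Δ : Finset (MBForm Pm)} {A : MBForm Pm} :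
    SeqFalse M s (Γ, insert A Δ) ↔ s ∉ M.val A ∧ SeqFalse M s (Γ, Δ) := by
  simp [SeqFalse, and_left_comm]

theorem FalseUnder.seqFalse {p : List ℕ} {Γ Δ : Finset (MBForm Pm)} {ts : NSeqs Pm}
    (hF : FalseUnder M t E) (hp : SubAt t p (.node Γ Δ ts)) : SeqFalse M (E p) (Γ, Δ) :=
  hF p Γ Δ ts hp

theorem FalseUnder.setSeq {p : List ℕ} {u : NSeq Pm} {Γ Δ : Finset (MBForm Pm)}
    (hF : FalseUnder M t E) (hp : SubAt t p u) (h : SeqFalse M (E p) (Γ, Δ)) :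
    FalseUnder M (t.setSeq p Γ Δ) E :=
  (falseUnder_setSeq_iff hp Γ Δ).2 ⟨h, fun q _ => falseUnder_iff_seqAt.1 hF q⟩

theorem FalseUnder.of_setSeq {p : List ℕ} {Γ Δ Γ' Δ' : Finset (MBForm Pm)} {ts : NSeqs Pm}
    (hF : FalseUnder M (t.setSeq p Γ' Δ') E) (hp : SubAt t p (.node Γ Δ ts))
    (hΓ : Γ ⊆ Γ') (hΔ : Δ ⊆ Δ') : FalseUnder M t E := by
  obtain ⟨hpF, hF⟩ := (falseUnder_setSeq_iff hp Γ' Δ').1 hF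
  refine falseUnder_iff_seqAt.2 fun q σ hσ => ?_
  by_cases hq : q = p
  · subst hq
    simp only [NSeq.seqAt, hp.sub?_eq, Option.map_some, Option.mem_def, Option.some_inj] at hσ
    exact hσ ▸ hpF.mono hΓ hΔ
  · exact hF q hq σ hσ

theorem FalseUnder.addChild {p : List ℕ} {Γ Δ Γa Δa : Finset (MBForm Pm)} {ts : NSeqs Pm}
    {s : M.F.S} (hF : FalseUnder M t E) (hp : SubAt t p (.node Γ Δ ts)) (l : MBLab Pm)
    (hs : SeqFalse M s (Γa, Δa)) :
    FalseUnder M (t.addChild p l (.node Γa Δa .nil)) (Function.update E (p ++ [ts.length]) s) := by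
  rw [falseUnder_iff_seqAt, NSeq.seqAt_addChild hp,
    Function.forall_update_iff _ fun q o => ∀ σ ∈ o, SeqFalse M (Function.update E _ s q) σ]
  refine ⟨by simpa using hs, fun q hq σ hσ => ?_⟩
  rw [Function.update_of_ne hq]
  exact falseUnder_iff_seqAt.1 hF q σ hσ

theorem IsEmb.addChild {p : List ℕ} {Γ Δ Γa Δa : Finset (MBForm Pm)} {ts : NSeqs Pm}
    {s : M.F.S} {l : MBLab Pm} (hE : IsEmb M t E) (hp : SubAt t p (.node Γ Δ ts))
    (hl : l.Holds (M.F.R (E p) s)) :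
    IsEmb M (t.addChild p l (.node Γa Δa .nil)) (Function.update E (p ++ [ts.length]) s) := by
  have hnew : ∀ {q u}, SubAt t q u → q ≠ p ++ [ts.length] := by
    rintro q u hq rfl
    simp [← sub?_eq_some_iff, NSeq.sub?_append_length hp] at hq
  rw [isEmb_iff_labelAt]
  intro q i l' hl'
  rw [Option.mem_def, labelAt_addChild hp] at hl'
  split_ifs at hl' with hqi
  · obtain ⟨rfl, rfl⟩ := hqi
    cases hl'
    simpa using hl
  · obtain ⟨Γq, Δq, tsq, u, hq, hget⟩ := labelAt_eq_some_iff.1 hl'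
    rw [Function.update_of_ne (hnew hq), Function.update_of_ne (hnew (hq.child hget))]
    exact hE q Γq Δq tsq i l' u hq hget

theorem mem_val_box_iff {s : M.F.S} {l : MBLab Pm} {A : MBForm Pm} :
    s ∈ M.val (l.box A) ↔ ∀ u, l.Holds (M.F.R s u) → u ∈ M.val A := by
  obtain ⟨α, _, _, _ | _⟩ := l <;> simp [MBLab.box, MBLab.Holds, MBRealization.val, MBForm.valR]

theorem mem_val_of_mem_val_mkBox {s u : M.F.S} {α : Pm.J} {d : Side} {l : MBLab Pm}
    {A : MBForm Pm} (hle : pleq α d l.α l.d) (hl : l.Holds (M.F.R s u))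
    (h : s ∈ M.val (mkBox d α A)) : u ∈ M.val A := by
  obtain ⟨β, _, _, d'⟩ := l
  cases d <;> cases d' <;> simp only [pleq] at hle <;>
    simp only [MBLab.Holds, forall_const, reduceCtorEq, IsEmpty.forall_iff, and_true,
      true_and] at hl
  · exact h u (hle.trans hl)
  · exact h u (hle.trans hl.le)
  · exact h u (hle.trans_le hl)
  · exact h u (hle.trans_lt hl)

theorem mem_val_of_mem_val_mkBox_self {s : M.F.S} {α : Pm.J} {d : Side} {A : MBForm Pm}
    (hne : ¬((α : ℝ) = 1 ∧ d = Side.o)) (h : s ∈ M.val (mkBox d α A)) : s ∈ M.val A := by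
  have hR : M.F.R s s = 1 := (M.F.eq_one_iff s s).2 rfl
  have hα : (α : ℝ) ≤ 1 := (Pm.subI α.2).2
  cases d
  · exact h s (hR ▸ hα)
  · exact h s (hR ▸ hα.lt_of_ne fun e => hne ⟨e, rfl⟩)

theorem mem_val_boxc_one {s : M.F.S} {A : MBForm Pm} :
    s ∈ M.val (.boxc ⟨1, Pm.one_mem⟩ A) ↔ s ∈ M.val A := by
  refine ⟨fun h => h s ((M.F.eq_one_iff s s).2 rfl).ge, fun h u hu => ?_⟩
  obtain rfl := (M.F.eq_one_iff s u).1 (le_antisymm (M.F.mem_Icc s u).2 hu)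
  exact h

theorem mem_val_boxo_one (s : M.F.S) (A : MBForm Pm) : s ∈ M.val (.boxo ⟨1, Pm.one_mem⟩ A) :=
  fun u hu => absurd (M.F.mem_Icc s u).2 (not_le.2 hu)

theorem mem_val_boxc_zero {s : M.F.S} {A : MBForm Pm} :
    s ∈ M.val (.boxc ⟨0, Pm.zero_mem⟩ A) ↔ ∀ u, u ∈ M.val A :=
  ⟨fun h u => h u (M.F.mem_Icc s u).1, fun h u _ => h u⟩

theorem NSValid.setSeq_of_subset {p : List ℕ} {Γ Δ Γ' Δ' : Finset (MBForm Pm)} {ts : NSeqs Pm}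
    (h : NSValid t) (hp : SubAt t p (.node Γ Δ ts)) (hΓ : Γ ⊆ Γ') (hΔ : Δ ⊆ Δ') :
    NSValid (t.setSeq p Γ' Δ') :=
  fun M E hE hF => h M E ((isEmb_setSeq_iff hp _ _).1 hE) (hF.of_setSeq hp hΓ hΔ)

/-- The shape of every one-premise rule except (□R): the conclusion weakens `t` at node `p`,
the premise rewrites `t` at node `r`. -/
theorem NSValid.setSeq_of_setSeq {p r : List ℕ} {u : NSeq Pm}
    {Γ Δ Γc Δc Γr Δr : Finset (MBForm Pm)} {ts : NSeqs Pm}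
    (h : NSValid (t.setSeq r Γr Δr)) (hp : SubAt t p (.node Γ Δ ts)) (hr : SubAt t r u)
    (hΓ : Γ ⊆ Γc) (hΔ : Δ ⊆ Δc)
    (hsem : ∀ (M : MBRealization Pm) (E : List ℕ → M.F.S), IsEmb M t E → FalseUnder M t E →
      SeqFalse M (E p) (Γc, Δc) → SeqFalse M (E r) (Γr, Δr)) :
    NSValid (t.setSeq p Γc Δc) := by
  intro M E hE hF
  rw [isEmb_setSeq_iff hp] at hE
  have hFt := hF.of_setSeq hp hΓ hΔ
  have hFp := ((falseUnder_setSeq_iff hp Γc Δc).1 hF).1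
  exact h M E ((isEmb_setSeq_iff hr _ _).2 hE) (hFt.setSeq hr (hsem M E hE hFt hFp))

theorem NSValid.of_cut {p : List ℕ} {Γ Δ : Finset (MBForm Pm)} {ts : NSeqs Pm}
    {A : MBForm Pm} (hp : SubAt t p (.node Γ Δ ts)) (h₁ : NSValid (t.setSeq p Γ (insert A Δ)))
    (h₂ : NSValid (t.setSeq p (insert A Γ) Δ)) : NSValid t := by
  intro M E hE hF
  by_cases hA : E p ∈ M.val A
  · exact h₂ M E ((isEmb_setSeq_iff hp _ _).2 hE)
      (hF.setSeq hp (seqFalse_insert_left.2 ⟨hA, hF.seqFalse hp⟩))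
  · exact h₁ M E ((isEmb_setSeq_iff hp _ _).2 hE)
      (hF.setSeq hp (seqFalse_insert_right.2 ⟨hA, hF.seqFalse hp⟩))

theorem NSValid.setSeq_conj {p : List ℕ} {Γ Δ : Finset (MBForm Pm)} {ts : NSeqs Pm}
    {A B : MBForm Pm} (hp : SubAt t p (.node Γ Δ ts))
    (hA : NSValid (t.setSeq p Γ (insert A Δ))) (hB : NSValid (t.setSeq p Γ (insert B Δ))) :
    NSValid (t.setSeq p Γ (insert (.conj A B) Δ)) := by
  intro M E hE hF
  have hE' := (isEmb_setSeq_iff hp _ _).1 hE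
  have hFt := hF.of_setSeq hp subset_rfl (Finset.subset_insert _ _)
  obtain ⟨hAB, hσ⟩ := seqFalse_insert_right.1 ((falseUnder_setSeq_iff hp _ _).1 hF).1
  by_cases hAp : E p ∈ M.val A
  · exact hB M E ((isEmb_setSeq_iff hp _ _).2 hE')
      (hFt.setSeq hp (seqFalse_insert_right.2 ⟨fun hBp => hAB ⟨hAp, hBp⟩, hσ⟩))
  · exact hA M E ((isEmb_setSeq_iff hp _ _).2 hE')
      (hFt.setSeq hp (seqFalse_insert_right.2 ⟨hAp, hσ⟩))

theorem NSValid.setSeq_box {p : List ℕ} {Γ Δ : Finset (MBForm Pm)} {ts : NSeqs Pm}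
    {l : MBLab Pm} {A : MBForm Pm} (hp : SubAt t p (.node Γ Δ ts))
    (h : NSValid (t.addChild p l (.node ∅ {A} .nil))) :
    NSValid (t.setSeq p Γ (insert (l.box A) Δ)) := by
  intro M E hE hF
  obtain ⟨hbox, -⟩ := seqFalse_insert_right.1 ((falseUnder_setSeq_iff hp _ _).1 hF).1
  obtain ⟨s, hl, hs⟩ : ∃ s, l.Holds (M.F.R (E p) s) ∧ s ∉ M.val A := by
    simpa [mem_val_box_iff] using hbox
  refine h M _ (((isEmb_setSeq_iff hp _ _).1 hE).addChild hp hl)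
    ((hF.of_setSeq hp subset_rfl (Finset.subset_insert _ _)).addChild hp l ?_)
  simpa [SeqFalse] using hs

theorem Provable.nsValid {cut : Bool} {t : NSeq Pm} (h : Provable cut t) : NSValid t := by
  induction h with
  | axId hp hΓ hΔ => exact fun M E _ hF => (hF.seqFalse hp).2 _ hΔ ((hF.seqFalse hp).1 _ hΓ)
  | axTop hp hΔ => exact fun M E _ hF => (hF.seqFalse hp).2 _ hΔ trivial
  | axBot hp hΓ => exact fun M E _ hF => (hF.seqFalse hp).1 _ hΓ
  | axBoxO1 hp hΔ => exact fun M E _ hF => (hF.seqFalse hp).2 _ hΔ (mem_val_boxo_one _ _)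
  | cutR hp _ _ ih₁ ih₂ => exact NSValid.of_cut hp ih₁ ih₂
  | wL hp _ ih => exact ih.setSeq_of_subset hp (Finset.subset_insert _ _) subset_rfl
  | wR hp _ ih => exact ih.setSeq_of_subset hp subset_rfl (Finset.subset_insert _ _)
  | negL hp _ ih =>
      exact ih.setSeq_of_setSeq hp hp (Finset.subset_insert _ _) subset_rfl
        fun _ _ _ _ hσ => seqFalse_insert_right.2 (seqFalse_insert_left.1 hσ)
  | negR hp _ ih =>
      refine ih.setSeq_of_setSeq hp hp subset_rfl (Finset.subset_insert _ _) fun _ _ _ _ hσ => ?_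
      obtain ⟨hA, hσ⟩ := seqFalse_insert_right.1 hσ
      exact seqFalse_insert_left.2 ⟨not_not.1 hA, hσ⟩
  | andL hp _ ih =>
      refine ih.setSeq_of_setSeq hp hp (Finset.subset_insert _ _) subset_rfl fun _ _ _ _ hσ => ?_
      obtain ⟨⟨hA, hB⟩, hσ⟩ := seqFalse_insert_left.1 hσ
      exact seqFalse_insert_left.2 ⟨hA, seqFalse_insert_left.2 ⟨hB, hσ⟩⟩
  | andR hp _ _ ihA ihB => exact NSValid.setSeq_conj hp ihA ihB
  | @boxL _ t p Γ Δ ts i l u Γ' Δ' ts' A α d hp hget hc hle _ ih =>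
      refine ih.setSeq_of_setSeq hp hc (Finset.subset_insert _ _) subset_rfl
        fun M E hE hF hσ => seqFalse_insert_left.2 ⟨?_, hF.seqFalse hc⟩
      exact mem_val_of_mem_val_mkBox hle (hE p Γ Δ ts i l u hp hget) (seqFalse_insert_left.1 hσ).1
  | @boxLsym _ t p Γ Δ ts i l u Γ' Δ' ts' A α d hp hget hc hle _ ih =>
      refine ih.setSeq_of_setSeq hc hp (Finset.subset_insert _ _) subset_rfl
        fun M E hE hF hσ => seqFalse_insert_left.2 ⟨?_, hF.seqFalse hp⟩
      have hl := hE p Γ Δ ts i l u hp hget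
      rw [M.F.symm] at hl
      exact mem_val_of_mem_val_mkBox hle hl (seqFalse_insert_left.1 hσ).1
  | boxLself hp hne _ ih =>
      refine ih.setSeq_of_setSeq hp hp (Finset.subset_insert _ _) subset_rfl fun _ _ _ _ hσ => ?_
      obtain ⟨hA, hσ⟩ := seqFalse_insert_left.1 hσ
      exact seqFalse_insert_left.2 ⟨mem_val_of_mem_val_mkBox_self hne hA, hσ⟩
  | boxC0 hp hq _ ih =>
      refine ih.setSeq_of_setSeq hq hp (Finset.subset_insert _ _) subset_rfl
        fun _ _ _ hF hσ => seqFalse_insert_left.2 ⟨?_, hF.seqFalse hp⟩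
      exact mem_val_boxc_zero.1 (seqFalse_insert_left.1 hσ).1 _
  | boxRself hp _ ih =>
      refine ih.setSeq_of_setSeq hp hp subset_rfl (Finset.subset_insert _ _) fun _ _ _ _ hσ => ?_
      obtain ⟨hA, hσ⟩ := seqFalse_insert_right.1 hσ
      exact seqFalse_insert_right.2 ⟨mt mem_val_boxc_one.2 hA, hσ⟩
  | boxR hp _ ih => exact NSValid.setSeq_box hp ih

/-- Soundness of NSMB: if a nested-sequent is provable in
NSMB, then it is valid. -/
theorem soundness_NSMB {Pm : MBParams} (t : NSeq Pm) (h : Provable true t) :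
    NSValid t := h.nsValid

end MBQL
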